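/- Let n, q ∈ ℕ, let Ā ∈ ℝ^{q×q} be symmetric positive definite with inverse square root Ā^{−1/2} (the unique symmetric positive definite square root of Ā⁻¹), let ζ̄ ∈ ℝ^{q×n}, and let p : ℝⁿ × ℝⁿ → ℝ^{q}, g : ℝⁿ → ℝⁿ, λ : ℝⁿ × ℝⁿ → ℝ, and a : ℝⁿ × ℝⁿ → ℝ be functions. Suppose that for every (x, e) ∈ ℝⁿ × ℝⁿ: (i) λ(x, e) > 0, and (ii) the symmetric block matrix of size (1+n+q) given by [[a(x,e) + ⟨g(x), ζ̄ᵀ p(x,e)⟩, g(x)ᵀ, λ(x,e) (Ā^{−1/2} p(x,e))ᵀ], [g(x), −2λ(x,e) Iₙ, 0], [λ(x,e) Ā^{−1/2} p(x,e), 0, −2λ(x,e) I_q]] is negative semidefinite. Then for every matrix ζ ∈ ℝ^{q×n} of the form ζ = ζ̄ + Ā^{−1/2} Υ with ‖Υ‖ ≤ 1, and for every (x, e) ∈ ℝⁿ × ℝⁿ, one has ⟨g(x), ζᵀ p(x,e)⟩ ≤ −a(x, e). -/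

import Mathlib

/-! Testing the negative semidefinite block matrix at `(1, b / (2λ))`, where
`b = (g, λ Ā^{-1/2} p)` is its off-diagonal column, gives the Schur complement inequality
`a + ⟨g, ζ̄ᵀ p⟩ + (|g|² + λ² |Ā^{-1/2} p|²) / (2λ) ≤ 0`. Since `Ā^{-1/2}` is symmetric, the
perturbation `⟨g, (Ā^{-1/2} Υ)ᵀ p⟩` equals `⟨Ā^{-1/2} p, Υ g⟩`, and Young's inequality with weight
`λ`, together with `|Υ g| ≤ |g|`, bounds it by exactly that fraction. -/

open Matrix

/-- The square root of a positive semidefinite matrix, as `Matrix.PosSemidef.sqrt` was defined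
in Mathlib (December 2024); it has since been removed. -/
noncomputable def Matrix.PosSemidef.sqrt {n : Type*} [Fintype n] [DecidableEq n]
    {A : Matrix n n ℝ} (hA : A.PosSemidef) : Matrix n n ℝ :=
  hA.1.eigenvectorUnitary.1 * diagonal ((↑) ∘ (√·) ∘ hA.1.eigenvalues) *
  (star hA.1.eigenvectorUnitary : Matrix n n ℝ)

namespace Matrix

theorem PosSemidef.sqrt_transpose {n : Type*} [Fintype n] [DecidableEq n] {A : Matrix n n ℝ}
    (hA : A.PosSemidef) : hA.sqrtᵀ = hA.sqrt := by
  have h : hA.sqrt.IsHermitian :=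
    isHermitian_mul_mul_conjTranspose _ (isHermitian_diagonal _)
  rwa [IsHermitian, conjTranspose_eq_transpose_of_trivial] at h

theorem fromBlocks_smul_one {m n α : Type*} [DecidableEq m] [DecidableEq n] [Semiring α]
    (r : α) : fromBlocks (r • (1 : Matrix m m α)) 0 0 (r • (1 : Matrix n n α)) = r • 1 := by
  rw [← fromBlocks_one, fromBlocks_smul, smul_zero, smul_zero]

theorem dotProduct_transpose_mul_mulVec {l m n α : Type*} [Fintype l] [Fintype m] [Fintype n]
    [CommSemiring α] (A : Matrix l m α) (B : Matrix m n α) (v : n → α) (w : l → α) :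
    v ⬝ᵥ (A * B)ᵀ *ᵥ w = Aᵀ *ᵥ w ⬝ᵥ B *ᵥ v := by
  rw [transpose_mul, ← mulVec_mulVec, dotProduct_mulVec, vecMul_transpose, dotProduct_comm]

theorem _root_.EuclideanSpace.norm_toLp_sq {n : Type*} [Fintype n] (w : n → ℝ) :
    ‖WithLp.toLp 2 w‖ ^ 2 = w ⬝ᵥ w := by
  rw [← real_inner_self_eq_norm_sq, EuclideanSpace.inner_toLp_toLp, star_trivial]

theorem mulVec_dotProduct_self_le_of_opNorm_le {m n : Type*} [Fintype m] [Fintype n]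
    [DecidableEq n] (Υ : Matrix m n ℝ) {K : ℝ}
    (hΥ : ‖LinearMap.toContinuousLinearMap (toEuclideanLin Υ)‖ ≤ K) (v : n → ℝ) :
    Υ *ᵥ v ⬝ᵥ Υ *ᵥ v ≤ K ^ 2 * (v ⬝ᵥ v) := by
  have h := (LinearMap.toContinuousLinearMap (toEuclideanLin Υ)).le_of_opNorm_le hΥ
    (WithLp.toLp 2 v)
  calc Υ *ᵥ v ⬝ᵥ Υ *ᵥ v = ‖WithLp.toLp 2 (Υ *ᵥ v)‖ ^ 2 :=
        (EuclideanSpace.norm_toLp_sq _).symm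
    _ ≤ (K * ‖WithLp.toLp 2 v‖) ^ 2 := pow_le_pow_left₀ (norm_nonneg _) h 2
    _ = K ^ 2 * (v ⬝ᵥ v) := by rw [mul_pow, EuclideanSpace.norm_toLp_sq]

theorem two_mul_dotProduct_le {m : Type*} [Fintype m] (u v : m → ℝ) {r : ℝ} (hr : 0 < r) :
    2 * (u ⬝ᵥ v) ≤ r * (u ⬝ᵥ u) + r⁻¹ * (v ⬝ᵥ v) := by
  have h := dotProduct_star_self_nonneg (r • u - v)
  simp only [star_trivial, sub_dotProduct, dotProduct_sub, smul_dotProduct, dotProduct_smul,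
    smul_eq_mul, dotProduct_comm v u] at h
  have : r * (2 * (u ⬝ᵥ v)) ≤ r * (r * (u ⬝ᵥ u) + r⁻¹ * (v ⬝ᵥ v)) := by
    rw [mul_add, mul_inv_cancel_left₀ hr.ne']
    linarith
  exact le_of_mul_le_mul_left this hr

section ScalarBlock

variable {m : Type*} [Fintype m] [DecidableEq m]

theorem sumElim_dotProduct_fromBlocks_scalar_mulVec (c r : ℝ) (b u : m → ℝ) :
    Sum.elim (fun _ : Unit => 1) u ⬝ᵥ
        fromBlocks (of fun _ _ => c) (of fun _ => b) (of fun _ => b)ᵀ (r • 1) *ᵥ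
          Sum.elim (fun _ : Unit => 1) u =
      c + 2 * (b ⬝ᵥ u) + r * (u ⬝ᵥ u) := by
  have hrow : (of fun _ : Unit => b) *ᵥ u = fun _ => b ⬝ᵥ u := rfl
  have hcol : (of fun _ : Unit => b)ᵀ *ᵥ (fun _ => 1) = b := by ext; simp [mulVec, dotProduct]
  have hc : (fun _ : Unit => (1 : ℝ)) ⬝ᵥ (of fun _ _ : Unit => c) *ᵥ (fun _ => 1) = c := by
    simp [dotProduct, mulVec]
  have hb : (fun _ : Unit => (1 : ℝ)) ⬝ᵥ (fun _ => b ⬝ᵥ u) = b ⬝ᵥ u := by simp [dotProduct]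
  simp only [fromBlocks_mulVec, sumElim_dotProduct_sumElim, smul_mulVec, one_mulVec,
    Sum.elim_comp_inl, Sum.elim_comp_inr, hrow, hcol, dotProduct_add, dotProduct_smul]
  rw [hc, hb, dotProduct_comm u b, smul_eq_mul]
  ring

theorem add_dotProduct_self_div_nonpos_of_posSemidef_neg_fromBlocks {c r : ℝ} (hr : 0 < r)
    (b : m → ℝ)
    (h : (-fromBlocks (of fun _ _ : Unit => c) (of fun (_ : Unit) => b)
      (of fun (_ : Unit) => b)ᵀ ((-r) • 1)).PosSemidef) :
    c + (b ⬝ᵥ b) / r ≤ 0 := by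
  have hq := h.dotProduct_mulVec_nonneg (Sum.elim (fun _ => 1) (r⁻¹ • b))
  rw [star_trivial, neg_mulVec, dotProduct_neg,
    sumElim_dotProduct_fromBlocks_scalar_mulVec] at hq
  simp only [dotProduct_smul, smul_dotProduct, smul_eq_mul] at hq
  have : c + (b ⬝ᵥ b) / r = c + 2 * (r⁻¹ * (b ⬝ᵥ b)) + -r * (r⁻¹ * (r⁻¹ * (b ⬝ᵥ b))) := by
    field_simp
    ring
  linarith

end ScalarBlock

end Matrix

/-- Core of Theorem 1 of the paper: if `λ(x,e) > 0` and the block matrix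
`[[a(x,e) + ⟨g(x), ζ̄ᵀp(x,e)⟩, g(x)ᵀ, λ(x,e)(Ā^{-1/2}p(x,e))ᵀ],
  [g(x), -2λ(x,e)Iₙ, 0], [λ(x,e)Ā^{-1/2}p(x,e), 0, -2λ(x,e)I_q]]`
is negative semidefinite for all `(x,e)`, then for every `ζ = ζ̄ + Ā^{-1/2}Υ`
with `‖Υ‖ ≤ 1` and all `(x,e)`, `⟨g(x), ζᵀp(x,e)⟩ ≤ -a(x,e)`. -/
theorem data_driven_iss_decrease {n q : ℕ}
    (Abar : Matrix (Fin q) (Fin q) ℝ) (hA : Abar.PosDef)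
    (ζbar : Matrix (Fin q) (Fin n) ℝ)
    (p : (Fin n → ℝ) → (Fin n → ℝ) → (Fin q → ℝ))
    (g : (Fin n → ℝ) → (Fin n → ℝ))
    (lam : (Fin n → ℝ) → (Fin n → ℝ) → ℝ)
    (a : (Fin n → ℝ) → (Fin n → ℝ) → ℝ)
    (hlam : ∀ x e, 0 < lam x e)
    (hM : ∀ x e : Fin n → ℝ,
      (-(Matrix.fromBlocks
        (Matrix.of fun (_ _ : Unit) =>
          a x e + g x ⬝ᵥ ζbarᵀ.mulVec (p x e))
        (Matrix.of fun (_ : Unit) j => Sum.elim (g x)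
          (fun i => lam x e * (hA.inv.posSemidef.sqrt.mulVec (p x e)) i) j)
        (Matrix.of fun (_ : Unit) j => Sum.elim (g x)
          (fun i => lam x e * (hA.inv.posSemidef.sqrt.mulVec (p x e)) i) j)ᵀ
        (Matrix.fromBlocks
          ((-(2 * lam x e)) • (1 : Matrix (Fin n) (Fin n) ℝ)) 0 0
          ((-(2 * lam x e)) • (1 : Matrix (Fin q) (Fin q) ℝ))))).PosSemidef) :
    ∀ Υ : Matrix (Fin q) (Fin n) ℝ,
      ‖LinearMap.toContinuousLinearMap (Matrix.toEuclideanLin Υ)‖ ≤ 1 →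
        ∀ x e : Fin n → ℝ,
          g x ⬝ᵥ (ζbar + hA.inv.posSemidef.sqrt * Υ)ᵀ.mulVec (p x e)
            ≤ -a x e := by
  intro Υ hΥ x e
  set S := hA.inv.posSemidef.sqrt
  set L := lam x e
  have hL : 0 < L := hlam x e
  have hschur := add_dotProduct_self_div_nonpos_of_posSemidef_neg_fromBlocks
    (b := Sum.elim (g x) (L • S *ᵥ p x e)) (by positivity : 0 < 2 * L)
    (by rw [← fromBlocks_smul_one]; exact hM x e)
  rw [sumElim_dotProduct_sumElim, smul_dotProduct, dotProduct_smul, smul_eq_mul, smul_eq_mul,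
    ← mul_assoc, ← sq] at hschur
  have hΥg := mulVec_dotProduct_self_le_of_opNorm_le Υ hΥ (g x)
  rw [one_pow, one_mul] at hΥg
  have hyoung := two_mul_dotProduct_le (S *ᵥ p x e) (Υ *ᵥ g x) hL
  rw [transpose_add, add_mulVec, dotProduct_add, dotProduct_transpose_mul_mulVec,
    PosSemidef.sqrt_transpose]
  have hsplit : (g x ⬝ᵥ g x + L ^ 2 * (S *ᵥ p x e ⬝ᵥ S *ᵥ p x e)) / (2 * L) =
      (L * (S *ᵥ p x e ⬝ᵥ S *ᵥ p x e) + L⁻¹ * (g x ⬝ᵥ g x)) / 2 := by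
    field_simp
    ring
  linarith [mul_le_mul_of_nonneg_left hΥg (inv_nonneg.mpr hL.le)]
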